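/- arXiv:1903.05844 — 2 statements merged into one kernel-verified Lean document; each statement's English description precedes it below -/
import Mathlib

section
/- (Lemma 1.) Let Σ ∈ ℝ^{(m+1)×(m+1)} be symmetric positive definite with blocks Σ_O ∈ ℝ^{m×m}, Σ_{OS} ∈ ℝ^m, Σ_S ∈ ℝ, let K_O be the observed block of Σ^{-1}, and let z = √c·Σ_O^{-1}Σ_{OS} with c = (Σ_S − Σ_{OS}^TΣ_O^{-1}Σ_{OS})^{-1}. Suppose: (i) every row and column of K_O has at most d nonzero entries; (ii) every entry of Σ_{OS} lies in [a_min, a_max] with 0 < a_min ≤ a_max; (iii) ‖Σ_O^{-1}‖_{∞→∞} ≤ 8/(5 c_min m) for some c_min > 0; and (iv) σ_max(Σ_O) ≤ (2m−1) c_max for some c_max ≥ c_min. Then μ(Ω(K_O)) · ξ(T(zz^T)) ≤ (6.4 d/√m) · (c_max/c_min) · (a_max/a_min). -/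
open Matrix BigOperators
open scoped Classical

noncomputable section

/-- Spectral norm (largest singular value / ℓ²→ℓ² operator norm). -/
noncomputable def spec {n : Type*} [Fintype n] [DecidableEq n] (A : Matrix n n ℝ) : ℝ :=
  ‖Matrix.toEuclideanCLM (𝕜 := ℝ) A‖

/-- Sup-norm of a vector (pi norm). -/
noncomputable def snorm {n : Type*} [Fintype n] (v : n → ℝ) : ℝ := ‖v‖

/-- Maximum absolute entry of a matrix. -/
noncomputable def entryMax {n : Type*} [Fintype n] (A : Matrix n n ℝ) : ℝ :=
  snorm (fun i => snorm (fun j => A i j))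

/-- The `ℓ∞ → ℓ∞` induced operator norm of a matrix: the maximum row sum of absolute values. -/
noncomputable def linftyOpNorm {n : Type*} [Fintype n] (A : Matrix n n ℝ) : ℝ :=
  snorm (fun i => ∑ j, |A i j|)

/-- μ(Ω(S)) = max { ‖N‖₂ : supp N ⊆ supp S, max_{ij}|N_{ij}| = 1 }. -/
noncomputable def muOmega {n : Type*} [Fintype n] [DecidableEq n] (S : Matrix n n ℝ) : ℝ :=
  sSup {x | ∃ N : Matrix n n ℝ,
    (∀ i j, S i j = 0 → N i j = 0) ∧ entryMax N = 1 ∧ x = spec N}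

/-- Membership of a matrix in the tangent space `T(zzᵀ) = {zxᵀ + yzᵀ : x, y}`. -/
def memT {n : Type*} (z : n → ℝ) (N : Matrix n n ℝ) : Prop :=
  ∃ x y : n → ℝ, N = Matrix.of fun i j => z i * x j + y i * z j

/-- ξ(T(zzᵀ)) = max { max_{ij}|N_{ij}| : N ∈ T(zzᵀ), ‖N‖₂ ≤ 1 }. -/
noncomputable def xiT {n : Type*} [Fintype n] [DecidableEq n] (z : n → ℝ) : ℝ :=
  sSup {x | ∃ N : Matrix n n ℝ, memT z N ∧ spec N ≤ 1 ∧ x = entryMax N}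


set_option maxHeartbeats 1000000
set_option synthInstance.maxHeartbeats 1000000

noncomputable def enormE {n : Type*} [Fintype n] (v : n → ℝ) : ℝ := Real.sqrt (∑ i, v i ^ 2)

lemma enorm_eq {n : Type*} [Fintype n] (v : n → ℝ) :
    ‖(WithLp.equiv 2 (n → ℝ)).symm v‖ = enormE v := by
  rw [EuclideanSpace.norm_eq, enormE]
  congr 1; apply Finset.sum_congr rfl; intro i _
  simp [sq_abs]

lemma enorm_mulVec_le {n : Type*} [Fintype n] [DecidableEq n] (A : Matrix n n ℝ) (v : n → ℝ) :
    enormE (A *ᵥ v) ≤ spec A * enormE v := by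
  have := (Matrix.toEuclideanCLM (𝕜 := ℝ) A).le_opNorm ((WithLp.equiv 2 (n → ℝ)).symm v)
  rwa [show Matrix.toEuclideanCLM (𝕜 := ℝ) A ((WithLp.equiv 2 (n → ℝ)).symm v) = (WithLp.equiv 2 (n → ℝ)).symm (A *ᵥ v) from rfl, enorm_eq, enorm_eq] at this

lemma spec_transpose {n : Type*} [Fintype n] [DecidableEq n] (A : Matrix n n ℝ) :
    spec Aᵀ = spec A := by
  have h : Aᵀ = star A := by
    ext i j; simp [Matrix.star_eq_conjTranspose, Matrix.conjTranspose_apply]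
  rw [spec, h, map_star, ContinuousLinearMap.star_eq_adjoint]
  exact LinearIsometryEquiv.norm_map ContinuousLinearMap.adjoint _

lemma abs_le_enorm {n : Type*} [Fintype n] (v : n → ℝ) (i : n) : |v i| ≤ enormE v := by
  rw [enormE, ← Real.sqrt_sq_eq_abs]
  exact Real.sqrt_le_sqrt (Finset.single_le_sum (fun j _ => sq_nonneg (v j)) (Finset.mem_univ i))

lemma enorm_nonneg {n : Type*} [Fintype n] (v : n → ℝ) : 0 ≤ enormE v := Real.sqrt_nonneg _

lemma spec_le_bound {n : Type*} [Fintype n] [DecidableEq n] (N : Matrix n n ℝ) (d : ℝ)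
    (hd : 0 ≤ d)
    (hr : ∀ i, ∑ j, |N i j| ≤ d) (hc : ∀ j, ∑ i, |N i j| ≤ d) :
    spec N ≤ d := by
  rw [spec]
  apply ContinuousLinearMap.opNorm_le_bound _ hd
  intro x
  have hx : x = (WithLp.equiv 2 (n → ℝ)).symm (WithLp.equiv 2 (n → ℝ) x) := rfl
  set v : n → ℝ := WithLp.equiv 2 (n → ℝ) x with hv
  rw [hx, show Matrix.toEuclideanCLM (𝕜 := ℝ) N ((WithLp.equiv 2 (n → ℝ)).symm v) = (WithLp.equiv 2 (n → ℝ)).symm (N *ᵥ v) from rfl, enorm_eq, enorm_eq]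
  rw [enormE, enormE, ← Real.sqrt_sq hd, ← Real.sqrt_mul (sq_nonneg d)]
  apply Real.sqrt_le_sqrt
  have key : ∀ i, (N *ᵥ v) i ^ 2 ≤ d * ∑ j, |N i j| * v j ^ 2 := by
    intro i
    have habs : |(N *ᵥ v) i| ≤ ∑ j, |N i j| * |v j| := by
      refine (Finset.abs_sum_le_sum_abs _ _).trans ?_
      apply Finset.sum_le_sum; intro j _; rw [abs_mul]
    have h1 : (N *ᵥ v) i ^ 2 ≤ (∑ j, |N i j| * |v j|) ^ 2 := by
      rw [← sq_abs]
      exact pow_le_pow_left₀ (abs_nonneg _) habs 2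
    have h2 : (∑ j, |N i j| * |v j|) ^ 2 ≤ (∑ j, |N i j|) * (∑ j, |N i j| * v j ^ 2) := by
      have hcs := Finset.sum_mul_sq_le_sq_mul_sq Finset.univ (fun j => Real.sqrt |N i j|)
        (fun j => Real.sqrt |N i j| * |v j|)
      have e1 : ∀ j : n, Real.sqrt |N i j| * (Real.sqrt |N i j| * |v j|) = |N i j| * |v j| := by
        intro j
        rw [← mul_assoc]; congr 1; exact Real.mul_self_sqrt (abs_nonneg _)
      have e2 : ∀ j : n, Real.sqrt |N i j| ^ 2 = |N i j| := fun j => Real.sq_sqrt (abs_nonneg _)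
      have e3 : ∀ j : n, (Real.sqrt |N i j| * |v j|) ^ 2 = |N i j| * v j ^ 2 := by
        intro j; rw [mul_pow, e2, sq_abs]
      calc (∑ j, |N i j| * |v j|) ^ 2
          = (∑ j, Real.sqrt |N i j| * (Real.sqrt |N i j| * |v j|)) ^ 2 := by
            congr 1; exact (Finset.sum_congr rfl fun j _ => e1 j).symm
        _ ≤ (∑ j, Real.sqrt |N i j| ^ 2) * ∑ j, (Real.sqrt |N i j| * |v j|) ^ 2 := hcs
        _ = (∑ j, |N i j|) * (∑ j, |N i j| * v j ^ 2) := by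
            rw [show (∑ j, Real.sqrt |N i j| ^ 2) = ∑ j, |N i j| from
                  Finset.sum_congr rfl fun j _ => e2 j,
                show (∑ j, (Real.sqrt |N i j| * |v j|) ^ 2) = ∑ j, |N i j| * v j ^ 2 from
                  Finset.sum_congr rfl fun j _ => e3 j]
    have h3 : (∑ j, |N i j|) * (∑ j, |N i j| * v j ^ 2) ≤ d * ∑ j, |N i j| * v j ^ 2 := by
      apply mul_le_mul_of_nonneg_right (hr i)
      exact Finset.sum_nonneg fun j _ => mul_nonneg (abs_nonneg _) (sq_nonneg _)
    exact h1.trans (h2.trans h3)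
  calc ∑ i, (N *ᵥ v) i ^ 2 ≤ ∑ i, d * ∑ j, |N i j| * v j ^ 2 :=
        Finset.sum_le_sum fun i _ => key i
    _ = d * ∑ j, (∑ i, |N i j|) * v j ^ 2 := by
        rw [← Finset.mul_sum, Finset.sum_comm]
        congr 1; exact Finset.sum_congr rfl fun j _ => by rw [Finset.sum_mul]
    _ ≤ d * ∑ j, d * v j ^ 2 := by
        apply mul_le_mul_of_nonneg_left _ hd
        exact Finset.sum_le_sum fun j _ =>
          mul_le_mul_of_nonneg_right (hc j) (sq_nonneg _)
    _ = d ^ 2 * ∑ j, v j ^ 2 := by rw [← Finset.mul_sum, ← mul_assoc, sq]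

lemma memT_entry_le {n : Type*} [Fintype n] [DecidableEq n] (z : n → ℝ) (hz : z ≠ 0)
    (N : Matrix n n ℝ) (hmem : memT z N) (hs : spec N ≤ 1) (i j : n) :
    |N i j| ≤ 2 * ‖z‖ / enormE z := by
  obtain ⟨x, y, hN⟩ := hmem
  set s : ℝ := ∑ k, z k ^ 2 with hsdef
  obtain ⟨k₀, hk₀⟩ := Function.ne_iff.mp hz
  have hk : z k₀ ≠ 0 := by simpa using hk₀
  have hs0 : 0 < s :=
    Finset.sum_pos' (fun _ _ => sq_nonneg _) ⟨k₀, Finset.mem_univ _, by positivity⟩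
  have henorm : enormE z = Real.sqrt s := rfl
  have hen0 : 0 < enormE z := by rw [henorm]; exact Real.sqrt_pos.mpr hs0
  set α : ℝ := (∑ k, x k * z k) / s with hα
  set x' : n → ℝ := fun k => x k - α * z k with hx'
  set y' : n → ℝ := fun k => y k + α * z k with hy'
  have hN' : ∀ a b, N a b = z a * x' b + y' a * z b := by
    intro a b; rw [hN]; simp only [Matrix.of_apply, hx', hy']; ring
  have hzz : ∑ k, z k * z k = s := by
    rw [hsdef]; exact Finset.sum_congr rfl fun k _ => (sq (z k)).symm
  have hx'z : ∑ k, x' k * z k = 0 := by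
    have heq : ∑ k, x' k * z k = (∑ k, x k * z k) - α * ∑ k, z k * z k := by
      rw [Finset.mul_sum, ← Finset.sum_sub_distrib]
      exact Finset.sum_congr rfl fun k _ => by simp only [hx']; ring
    rw [heq, hzz, hα, div_mul_cancel₀ _ hs0.ne', sub_self]
  have hNz : ∀ a, (N *ᵥ z) a = s * y' a := by
    intro a
    have : (N *ᵥ z) a = ∑ b, (z a * x' b + y' a * z b) * z b := by
      simp only [Matrix.mulVec, dotProduct]
      exact Finset.sum_congr rfl fun b _ => by rw [hN']
    rw [this]
    have expand : ∀ b : n, (z a * x' b + y' a * z b) * z b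
        = z a * (x' b * z b) + y' a * (z b * z b) := fun b => by ring
    rw [Finset.sum_congr rfl fun b _ => expand b, Finset.sum_add_distrib,
      ← Finset.mul_sum, ← Finset.mul_sum, hx'z, hzz]
    ring
  have hNTz : ∀ b, (Nᵀ *ᵥ z) b = s * x' b + (∑ k, y' k * z k) * z b := by
    intro b
    have : (Nᵀ *ᵥ z) b = ∑ a, (z a * x' b + y' a * z b) * z a := by
      simp only [Matrix.mulVec, dotProduct, Matrix.transpose_apply]
      exact Finset.sum_congr rfl fun a _ => by rw [hN']
    rw [this]
    have expand : ∀ a : n, (z a * x' b + y' a * z b) * z a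
        = x' b * (z a * z a) + z b * (y' a * z a) := fun a => by ring
    rw [Finset.sum_congr rfl fun a _ => expand a, Finset.sum_add_distrib,
      ← Finset.mul_sum, ← Finset.mul_sum, hzz]
    ring
  -- bound on y'
  have hy'bound : ∀ a, |y' a| ≤ 1 / enormE z := by
    intro a
    have h1 : |(N *ᵥ z) a| ≤ enormE (N *ᵥ z) := abs_le_enorm _ a
    have h2 : enormE (N *ᵥ z) ≤ spec N * enormE z := enorm_mulVec_le N z
    have h3 : spec N * enormE z ≤ 1 * enormE z :=
      mul_le_mul_of_nonneg_right hs hen0.le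
    have h4 : |(N *ᵥ z) a| ≤ enormE z := by linarith
    have h5 : |y' a| = |(N *ᵥ z) a| / s := by
      rw [hNz a, abs_mul, abs_of_pos hs0, mul_div_cancel_left₀ _ hs0.ne']
    rw [henorm] at h4
    rw [h5, henorm]
    rw [div_le_div_iff₀ hs0 (Real.sqrt_pos.mpr hs0)]
    calc |(N *ᵥ z) a| * Real.sqrt s ≤ Real.sqrt s * Real.sqrt s := by
          exact mul_le_mul_of_nonneg_right h4 (Real.sqrt_nonneg _)
      _ = s := Real.mul_self_sqrt hs0.le
      _ = 1 * s := (one_mul s).symm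
  -- bound on x'
  have hX : ∑ b, x' b ^ 2 ≤ 1 / s := by
    set X : ℝ := ∑ b, x' b ^ 2 with hXdef
    have hX0 : 0 ≤ X := Finset.sum_nonneg fun b _ => sq_nonneg _
    have hkey : s * X = ∑ b, x' b * (Nᵀ *ᵥ z) b := by
      rw [Finset.sum_congr rfl fun b (_ : b ∈ Finset.univ) => by
        rw [hNTz b]]
      have expand : ∀ b : n, x' b * (s * x' b + (∑ k, y' k * z k) * z b)
          = s * x' b ^ 2 + (∑ k, y' k * z k) * (x' b * z b) := fun b => by ring
      rw [Finset.sum_congr rfl fun b _ => expand b, Finset.sum_add_distrib,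
        ← Finset.mul_sum, ← Finset.mul_sum, hx'z]
      ring
    have hcs : (∑ b, x' b * (Nᵀ *ᵥ z) b) ^ 2 ≤ X * ∑ b, (Nᵀ *ᵥ z) b ^ 2 :=
      Finset.sum_mul_sq_le_sq_mul_sq Finset.univ _ _
    have hNT : ∑ b, (Nᵀ *ᵥ z) b ^ 2 ≤ s := by
      have h2 : enormE (Nᵀ *ᵥ z) ≤ spec Nᵀ * enormE z := enorm_mulVec_le Nᵀ z
      rw [spec_transpose] at h2
      have h3 : enormE (Nᵀ *ᵥ z) ≤ Real.sqrt s := by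
        rw [← henorm]; calc enormE (Nᵀ *ᵥ z) ≤ spec N * enormE z := h2
          _ ≤ 1 * enormE z := mul_le_mul_of_nonneg_right hs hen0.le
          _ = enormE z := one_mul _
      have h4 : Real.sqrt (∑ b, (Nᵀ *ᵥ z) b ^ 2) ≤ Real.sqrt s := h3
      nlinarith [Real.sq_sqrt (Finset.sum_nonneg fun b (_ : b ∈ Finset.univ) =>
        sq_nonneg ((Nᵀ *ᵥ z) b)), Real.sqrt_nonneg (∑ b, (Nᵀ *ᵥ z) b ^ 2),
        Real.sq_sqrt hs0.le, Real.sqrt_nonneg s]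
    have : (s * X) ^ 2 ≤ X * s := by
      calc (s * X) ^ 2 = (∑ b, x' b * (Nᵀ *ᵥ z) b) ^ 2 := by rw [hkey]
        _ ≤ X * ∑ b, (Nᵀ *ᵥ z) b ^ 2 := hcs
        _ ≤ X * s := mul_le_mul_of_nonneg_left hNT hX0
    rw [le_div_iff₀ hs0]
    nlinarith
  have hx'bound : ∀ b, |x' b| ≤ 1 / enormE z := by
    intro b
    have h1 : x' b ^ 2 ≤ 1 / s :=
      le_trans (Finset.single_le_sum (fun c (_ : c ∈ Finset.univ) => sq_nonneg (x' c))
        (Finset.mem_univ b)) hX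
    have h2 : Real.sqrt (x' b ^ 2) ≤ Real.sqrt (1 / s) := Real.sqrt_le_sqrt h1
    rw [Real.sqrt_sq_eq_abs, one_div, Real.sqrt_inv] at h2
    rw [henorm, one_div]
    exact h2
  -- conclude
  have hzi : |z i| ≤ ‖z‖ := by
    have := norm_le_pi_norm z i; rwa [Real.norm_eq_abs] at this
  have hzj : |z j| ≤ ‖z‖ := by
    have := norm_le_pi_norm z j; rwa [Real.norm_eq_abs] at this
  have hznorm0 : 0 ≤ ‖z‖ := norm_nonneg _
  calc |N i j| = |z i * x' j + y' i * z j| := by rw [hN']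
    _ ≤ |z i| * |x' j| + |y' i| * |z j| := by
        refine (abs_add_le _ _).trans ?_
        rw [abs_mul, abs_mul]
    _ ≤ ‖z‖ * (1 / enormE z) + (1 / enormE z) * ‖z‖ := by
        gcongr <;>
          first
            | exact hzi
            | exact hzj
            | exact hx'bound j
            | exact hy'bound i
    _ = 2 * ‖z‖ / enormE z := by field_simp; ring


lemma abs_le_entryMax {n : Type*} [Fintype n] (N : Matrix n n ℝ) (i j : n) :
    |N i j| ≤ entryMax N := by
  have h1 : |N i j| ≤ snorm (fun j' => N i j') := by
    have := norm_le_pi_norm (fun j' => N i j') j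
    rwa [Real.norm_eq_abs] at this
  have h2 : snorm (fun j' => N i j') ≤ entryMax N := by
    have h3 := norm_le_pi_norm (fun i' => snorm (fun j' => N i' j')) i
    have h0 : (0 : ℝ) ≤ snorm fun j' => N i j' := norm_nonneg _
    rwa [Real.norm_eq_abs, abs_of_nonneg h0] at h3
  exact h1.trans h2

lemma entryMax_le {n : Type*} [Fintype n] (N : Matrix n n ℝ) (B : ℝ) (hB : 0 ≤ B)
    (h : ∀ i j, |N i j| ≤ B) : entryMax N ≤ B := by
  simp only [entryMax, snorm]
  refine (pi_norm_le_iff_of_nonneg hB).mpr fun i => ?_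
  rw [Real.norm_eq_abs, abs_of_nonneg (norm_nonneg _)]
  exact (pi_norm_le_iff_of_nonneg hB).mpr fun j => by rw [Real.norm_eq_abs]; exact h i j

lemma entryMax_nonneg {n : Type*} [Fintype n] (N : Matrix n n ℝ) : 0 ≤ entryMax N :=
  norm_nonneg _

lemma muOmega_le_card {n : Type*} [Fintype n] [DecidableEq n] (S : Matrix n n ℝ) (d : ℕ)
    (hr : ∀ i, (Finset.univ.filter fun j => S i j ≠ 0).card ≤ d)
    (hc : ∀ j, (Finset.univ.filter fun i => S i j ≠ 0).card ≤ d) :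
    muOmega S ≤ d := by
  apply Real.sSup_le _ (Nat.cast_nonneg d)
  rintro xv ⟨N, hsupp, hmax, rfl⟩
  have hbd : ∀ i j, |N i j| ≤ 1 := fun i j => hmax ▸ abs_le_entryMax N i j
  apply spec_le_bound N d (Nat.cast_nonneg d)
  · intro i
    have key : ∑ j, |N i j| = ∑ j ∈ Finset.univ.filter (fun j => S i j ≠ 0), |N i j| :=
      (Finset.sum_filter_of_ne (fun j _ h => by
        intro hS
        exact h (by rw [hsupp i j hS, abs_zero]))).symm
    rw [key]
    calc ∑ j ∈ Finset.univ.filter (fun j => S i j ≠ 0), |N i j|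
        ≤ (Finset.univ.filter (fun j => S i j ≠ 0)).card • (1 : ℝ) :=
          Finset.sum_le_card_nsmul _ _ _ fun j _ => hbd i j
      _ = (Finset.univ.filter (fun j => S i j ≠ 0)).card := by simp
      _ ≤ d := by exact_mod_cast hr i
  · intro j
    have key : ∑ i, |N i j| = ∑ i ∈ Finset.univ.filter (fun i => S i j ≠ 0), |N i j| :=
      (Finset.sum_filter_of_ne (fun i _ h => by
        intro hS
        exact h (by rw [hsupp i j hS, abs_zero]))).symm
    rw [key]
    calc ∑ i ∈ Finset.univ.filter (fun i => S i j ≠ 0), |N i j|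
        ≤ (Finset.univ.filter (fun i => S i j ≠ 0)).card • (1 : ℝ) :=
          Finset.sum_le_card_nsmul _ _ _ fun i _ => hbd i j
      _ = (Finset.univ.filter (fun i => S i j ≠ 0)).card := by simp
      _ ≤ d := by exact_mod_cast hc j
  
lemma xiT_le {n : Type*} [Fintype n] [DecidableEq n] (z : n → ℝ) (hz : z ≠ 0) :
    xiT z ≤ 2 * ‖z‖ / enormE z := by
  have hB : 0 ≤ 2 * ‖z‖ / enormE z := div_nonneg (by positivity) (Real.sqrt_nonneg _)
  apply Real.sSup_le _ hB
  rintro xv ⟨N, hmem, hs, rfl⟩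
  exact entryMax_le N _ hB (memT_entry_le z hz N hmem hs)

lemma xiT_nonneg {n : Type*} [Fintype n] [DecidableEq n] (z : n → ℝ) : 0 ≤ xiT z :=
  Real.sSup_nonneg (by rintro xv ⟨N, _, _, rfl⟩; exact entryMax_nonneg N)

/-- **Lemma 1.** Under sparsity of `K_O`, bounds on the entries of `Σ_{OS}`, an
`ℓ∞→ℓ∞` bound on `Σ_O⁻¹`, and a Gerschgorin-style bound on `σ_max(Σ_O)`, the transversality
product satisfies `μ(Ω(K_O)) · ξ(T(zzᵀ)) ≤ (6.4 d / √m) (c_max/c_min) (a_max/a_min)`. -/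
theorem lemma_one (m d : ℕ)
    (SO : Matrix (Fin m) (Fin m) ℝ) (SOS : Matrix (Fin m) Unit ℝ)
    (SS : Matrix Unit Unit ℝ)
    (hPD : (Matrix.fromBlocks SO SOS SOSᵀ SS).PosDef)
    (amin amax cmin cmax : ℝ)
    (hamin : 0 < amin) (ha : amin ≤ amax)
    (hcmin : 0 < cmin) (hc : cmin ≤ cmax)
    -- (i) sparsity of `K_O`
    (hrow : ∀ i, (Finset.univ.filter fun j =>
      (Matrix.fromBlocks SO SOS SOSᵀ SS)⁻¹.toBlocks₁₁ i j ≠ 0).card ≤ d)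
    (hcol : ∀ j, (Finset.univ.filter fun i =>
      (Matrix.fromBlocks SO SOS SOSᵀ SS)⁻¹.toBlocks₁₁ i j ≠ 0).card ≤ d)
    -- (ii) entries of `Σ_{OS}` lie in `[a_min, a_max]`
    (hentries : ∀ i, amin ≤ SOS i () ∧ SOS i () ≤ amax)
    -- (iii) `‖Σ_O⁻¹‖_{∞→∞} ≤ 8/(5 c_min m)`
    (hinv : linftyOpNorm SO⁻¹ ≤ 8 / (5 * cmin * m))
    -- (iv) `σ_max(Σ_O) ≤ (2m−1) c_max`
    (hsmax : spec SO ≤ (2 * (m : ℝ) - 1) * cmax) :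
    muOmega ((Matrix.fromBlocks SO SOS SOSᵀ SS)⁻¹.toBlocks₁₁) *
      xiT (fun i => Real.sqrt ((SS - SOSᵀ * SO⁻¹ * SOS) () ())⁻¹ * (SO⁻¹ * SOS) i ()) ≤
    6.4 * d / Real.sqrt m * (cmax / cmin) * (amax / amin) := by
  classical
  set M := Matrix.fromBlocks SO SOS SOSᵀ SS with hM
  set K := M⁻¹.toBlocks₁₁ with hK
  set z : Fin m → ℝ :=
    fun i => Real.sqrt ((SS - SOSᵀ * SO⁻¹ * SOS) () ())⁻¹ * (SO⁻¹ * SOS) i () with hz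
  rcases Nat.eq_zero_or_pos m with hm | hm
  · -- degenerate case m = 0
    subst hm
    have hmu0 : muOmega K = 0 := by
      rw [muOmega]
      convert Real.sSup_empty using 2
      ext xv
      simp only [Set.mem_setOf_eq, Set.mem_empty_iff_false, iff_false]
      rintro ⟨N, _, hmax, _⟩
      have : entryMax N = 0 := by
        rw [entryMax, snorm, show (fun i : Fin 0 => snorm fun j => N i j) = 0 from
          funext fun i => absurd i.2 (by omega)]
        exact norm_zero
      rw [this] at hmax; norm_num at hmax
    rw [hmu0, zero_mul]
    rw [Nat.cast_zero, Real.sqrt_zero, div_zero, zero_mul, zero_mul]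
  · -- main case m ≥ 1
    -- Σ_O is positive definite
    have hSO : SO.PosDef := by
      have h := hPD.submatrix Sum.inl_injective
      convert h using 1
      ext i j; simp [hM]
    have hdet : IsUnit SO.det := hSO.det_pos.ne'.isUnit
    haveI : Invertible SO := SO.invertibleOfIsUnitDet hdet
    -- Schur complement entry is positive
    have hschur : 0 < (SS - SOSᵀ * SO⁻¹ * SOS) () () := by
      have hdetM := hPD.det_pos
      rw [hM, Matrix.det_fromBlocks₁₁] at hdetM
      rw [Matrix.invOf_eq_nonsing_inv] at hdetM
      have hd2 : 0 < (SS - SOSᵀ * SO⁻¹ * SOS).det := by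
        by_contra hcon
        push_neg at hcon
        nlinarith [hSO.det_pos, mul_nonpos_of_nonneg_of_nonpos hSO.det_pos.le hcon]
      rwa [Matrix.det_unique] at hd2
    set t : ℝ := Real.sqrt ((SS - SOSᵀ * SO⁻¹ * SOS) () ())⁻¹ with ht
    have ht0 : 0 < t := Real.sqrt_pos.mpr (inv_pos.mpr hschur)
    set v : Fin m → ℝ := fun i => (SO⁻¹ * SOS) i () with hv
    set w : Fin m → ℝ := fun k => SOS k () with hw
    have hveq : v = SO⁻¹ *ᵥ w := by
      funext i
      simp [hv, hw, Matrix.mul_apply, Matrix.mulVec, dotProduct]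
    have hSOv : SO *ᵥ v = w := by
      rw [hveq, Matrix.mulVec_mulVec, Matrix.mul_nonsing_inv _ hdet, Matrix.one_mulVec]
    -- lower bound for the euclidean norm of w
    have hwlow : Real.sqrt m * amin ≤ enormE w := by
      have hsum : (m : ℝ) * amin ^ 2 ≤ ∑ k, w k ^ 2 := by
        calc (m : ℝ) * amin ^ 2 = ∑ _k : Fin m, amin ^ 2 := by
              rw [Finset.sum_const, Finset.card_univ, Fintype.card_fin, nsmul_eq_mul]
          _ ≤ ∑ k, w k ^ 2 := by
              apply Finset.sum_le_sum
              intro k _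
              have h1 := (hentries k).1
              nlinarith [hamin]
      calc Real.sqrt m * amin = Real.sqrt ((m : ℝ) * amin ^ 2) := by
            rw [Real.sqrt_mul (Nat.cast_nonneg m), Real.sqrt_sq hamin.le]
        _ ≤ enormE w := Real.sqrt_le_sqrt hsum
    have hsm0 : (0 : ℝ) < Real.sqrt m := Real.sqrt_pos.mpr (by exact_mod_cast hm)
    have hwlow0 : 0 < enormE w := lt_of_lt_of_le (by positivity) hwlow
    -- upper chain : enormE w ≤ spec SO * enormE v
    have hchain : enormE w ≤ spec SO * enormE v := by
      rw [← hSOv]; exact enorm_mulVec_le SO v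
    have hv0 : 0 < enormE v := by
      rcases le_or_gt (enormE v) 0 with h | h
      · exfalso
        have h1 : enormE v = 0 := le_antisymm h (enorm_nonneg v)
        rw [h1, mul_zero] at hchain
        linarith
      · exact h
    have hspec0 : 0 < spec SO := by
      rcases le_or_gt (spec SO) 0 with h | h
      · exfalso; nlinarith
      · exact h
    -- lower bound for enormE v
    have hdenom0 : (0 : ℝ) < (2 * (m : ℝ) - 1) * cmax := by
      have : (1 : ℝ) ≤ (m : ℝ) := by exact_mod_cast hm
      have hcmax : 0 < cmax := lt_of_lt_of_le hcmin hc
      nlinarith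
    have hvlow : Real.sqrt m * amin / ((2 * (m : ℝ) - 1) * cmax) ≤ enormE v := by
      rw [div_le_iff₀ hdenom0]
      calc Real.sqrt m * amin ≤ enormE w := hwlow
        _ ≤ spec SO * enormE v := hchain
        _ ≤ ((2 * (m : ℝ) - 1) * cmax) * enormE v :=
            mul_le_mul_of_nonneg_right hsmax (enorm_nonneg v)
        _ = enormE v * ((2 * (m : ℝ) - 1) * cmax) := by ring
    -- upper bound for the sup norm of v
    have hm0 : (0 : ℝ) < (m : ℝ) := by exact_mod_cast hm
    have h5cm : (0 : ℝ) < 5 * cmin * m := by nlinarith [mul_pos hcmin hm0]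
    have hamax0 : 0 < amax := lt_of_lt_of_le hamin ha
    have hR1pos : 0 ≤ 8 / (5 * cmin * ↑m) * amax :=
      le_of_lt (mul_pos (div_pos (by norm_num) h5cm) hamax0)
    have hvsup : ‖v‖ ≤ 8 / (5 * cmin * m) * amax := by
      refine (pi_norm_le_iff_of_nonneg hR1pos).mpr fun i => ?_
      rw [Real.norm_eq_abs]
      have habs : |v i| ≤ (∑ k, |SO⁻¹ i k|) * amax := by
        have h1 : |v i| ≤ ∑ k, |SO⁻¹ i k| * amax := by
          rw [hveq]
          rw [show (SO⁻¹ *ᵥ w) i = ∑ k, SO⁻¹ i k * w k from by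
            simp [Matrix.mulVec, dotProduct]]
          refine (Finset.abs_sum_le_sum_abs _ _).trans ?_
          apply Finset.sum_le_sum
          intro k _
          rw [abs_mul]
          apply mul_le_mul_of_nonneg_left _ (abs_nonneg _)
          rw [abs_of_pos (lt_of_lt_of_le hamin (hentries k).1)]
          exact (hentries k).2
        rw [← Finset.sum_mul] at h1
        exact h1
      have hrowle : (∑ k, |SO⁻¹ i k|) ≤ 8 / (5 * cmin * m) := by
        refine le_trans ?_ hinv
        have := norm_le_pi_norm (fun i' => ∑ k, |SO⁻¹ i' k|) i
        rw [Real.norm_eq_abs, abs_of_nonneg (Finset.sum_nonneg fun k _ => abs_nonneg _)] at this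
        exact this
      calc |v i| ≤ (∑ k, |SO⁻¹ i k|) * amax := habs
        _ ≤ 8 / (5 * cmin * m) * amax :=
            mul_le_mul_of_nonneg_right hrowle (le_trans hamin.le ha)
    -- the vector z is nonzero and its norms scale
    have hzt : z = t • v := funext fun i => rfl
    have hzne : z ≠ 0 := by
      intro h
      have hvz : v = 0 := by
        funext i
        have := congrFun h i
        simp only [hzt, Pi.smul_apply, smul_eq_mul, Pi.zero_apply] at this ⊢
        rcases mul_eq_zero.mp this with h' | h'
        · exact absurd h' ht0.ne'
        · exact h'
      rw [hvz] at hv0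
      simp [enormE] at hv0
    have hznorm : ‖z‖ = t * ‖v‖ := by
      rw [hzt, norm_smul, Real.norm_eq_abs, abs_of_pos ht0]
    have hzenorm : enormE z = t * enormE v := by
      rw [hzt, enormE, enormE]
      have : ∀ i, (t • v) i ^ 2 = t ^ 2 * v i ^ 2 := fun i => by
        simp [mul_pow]
      rw [Finset.sum_congr rfl fun i _ => this i, ← Finset.mul_sum,
        Real.sqrt_mul (sq_nonneg t), Real.sqrt_sq ht0.le]
    -- bound on xiT
    have hratio : 2 * ‖z‖ / enormE z = 2 * ‖v‖ / enormE v := by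
      rw [hznorm, hzenorm]
      field_simp
    have hxi : xiT z ≤ 2 * ‖v‖ / enormE v := by
      rw [← hratio]; exact xiT_le z hzne
    -- bound on muOmega
    have hmu : muOmega K ≤ (d : ℝ) := muOmega_le_card K d hrow hcol
    -- combine
    have hxinn : 0 ≤ xiT z := xiT_nonneg z
    have hfinal : muOmega K * xiT z ≤ (d : ℝ) * (2 * ‖v‖ / enormE v) :=
      mul_le_mul hmu hxi hxinn (Nat.cast_nonneg d)
    refine hfinal.trans ?_
    -- now pure arithmetic
    set R1 : ℝ := 8 / (5 * cmin * m) * amax with hR1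
    set R2 : ℝ := Real.sqrt m * amin / ((2 * (m : ℝ) - 1) * cmax) with hR2
    have hR2pos : 0 < R2 := div_pos (mul_pos hsm0 hamin) hdenom0
    have hstep : 2 * ‖v‖ / enormE v ≤ 2 * R1 / R2 := by
      apply div_le_div₀ (by linarith [hR1pos]) (by linarith [hvsup]) hR2pos hvlow
    have harj : (d : ℝ) * (2 * ‖v‖ / enormE v) ≤ (d : ℝ) * (2 * R1 / R2) :=
      mul_le_mul_of_nonneg_left hstep (Nat.cast_nonneg d)
    refine harj.trans ?_
    rw [show (6.4 : ℝ) * d / Real.sqrt m * (cmax / cmin) * (amax / amin)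
        = (d : ℝ) * (6.4 / Real.sqrt m * (cmax / cmin) * (amax / amin)) by ring]
    apply mul_le_mul_of_nonneg_left _ (Nat.cast_nonneg d)
    rw [hR1, hR2]
    have hcmax : 0 < cmax := lt_of_lt_of_le hcmin hc
    have hamax : 0 < amax := lt_of_lt_of_le hamin ha
    have hsq : Real.sqrt m * Real.sqrt m = (m : ℝ) := Real.mul_self_sqrt (Nat.cast_nonneg m)
    have h1m : (1 : ℝ) ≤ (m : ℝ) := by exact_mod_cast hm
    rw [div_le_iff₀ (div_pos (mul_pos hsm0 hamin) hdenom0)]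
    field_simp
    set sm := Real.sqrt (m:ℝ)
    have hd2pos : (0:ℝ) < sm * cmin * amin * ((2 * (m:ℝ) - 1) * cmax) :=
      mul_pos (mul_pos (mul_pos hsm0 hcmin) hamin) hdenom0
    rw [le_div_iff₀ (by linarith)]
    nlinarith [mul_pos (mul_pos (mul_pos (mul_pos hamax0 hsm0) hcmin) hamin) hcmax]
end
end

section
/- Let {s,t} and {u,v} be disjoint pairs of distinct indices in {1,…,m}, and let P_{G^{st}} and P_{G^{uv}} denote the marginal distributions on {−1,1}^m of (λ_1,…,λ_m) under the weak supervision Ising models f_{G^{st}} and f_{G^{uv}}. Then the symmetric Kullback–Leibler divergence satisfies S(P_{G^{st}} ‖ P_{G^{uv}}) = D(P_{G^{st}} ‖ P_{G^{uv}}) + D(P_{G^{uv}} ‖ P_{G^{st}}) = 2θ (E_{G^{st}}[λ_s λ_t] − E_{G^{uv}}[λ_s λ_t]) = 2θ (1 − 4(e^{4θ}+3)^{−1} − tanh²(θ)). -/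
/-! Summing out the latent label `Y`, the marginal of `G^{st}` is `exp (θ λ_s λ_t) W(λ) / Z_{st}`
with `W` independent of the pair, and so is `Z_{st}`: writing `exp (θ z) = cosh θ (1 + z tanh θ)`
for `z = ±1`, every moment of the star factorises over the sources into `(2 cosh θ)^m tanh^k θ`.
Hence `log (P_{st} / P_{uv}) = θ (λ_s λ_t - λ_u λ_v)`, the symmetric divergence is `θ` times a
combination of four pair correlations, and these equal
`(tanh² θ + tanh θ) / (1 + tanh³ θ) = 1 - 4 / (e^{4θ} + 3)` on the edge and `tanh² θ` on a
disjoint pair. -/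

open BigOperators

noncomputable section

/-- The `±1` spin value of a Boolean configuration entry. -/
def pm (b : Bool) : ℝ := if b then 1 else -1

/-- Energy (log unnormalized weight) of a full configuration `σ` of the sources and the latent
label under the graph `G^{st}`: edges `(λ_i, Y)` for all `i` and the single edge `(λ_s, λ_t)`,
all with parameter `θ`. -/
def energy (m : ℕ) (θ : ℝ) (s t : Fin m) (σ : Fin m ⊕ Unit → Bool) : ℝ :=
  θ * ((∑ i : Fin m, pm (σ (Sum.inl i)) * pm (σ (Sum.inr ()))) +
    pm (σ (Sum.inl s)) * pm (σ (Sum.inl t)))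

/-- Partition function of the Ising model `f_{G^{st}}`. -/
def partition (m : ℕ) (θ : ℝ) (s t : Fin m) : ℝ :=
  ∑ σ : Fin m ⊕ Unit → Bool, Real.exp (energy m θ s t σ)

/-- The Ising probability mass function `f_{G^{st}}` on full configurations `{−1,1}^{m+1}`. -/
def isingPMF (m : ℕ) (θ : ℝ) (s t : Fin m) (σ : Fin m ⊕ Unit → Bool) : ℝ :=
  Real.exp (energy m θ s t σ) / partition m θ s t

/-- Marginal distribution `P_{G^{st}}` of the observed sources `(λ_1, …, λ_m)`. -/
def margPMF (m : ℕ) (θ : ℝ) (s t : Fin m) (x : Fin m → Bool) : ℝ :=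
  ∑ y : Bool, isingPMF m θ s t (fun i => Sum.elim x (fun _ => y) i)

/-- Expectation `E_{G^{st}}[λ_a λ_b]`. -/
def isingCorr (m : ℕ) (θ : ℝ) (s t a b : Fin m) : ℝ :=
  ∑ σ : Fin m ⊕ Unit → Bool,
    isingPMF m θ s t σ * (pm (σ (Sum.inl a)) * pm (σ (Sum.inl b)))

/-- Kullback–Leibler divergence between two pmfs on `{−1,1}^m`. -/
def klDiv (m : ℕ) (P Q : (Fin m → Bool) → ℝ) : ℝ :=
  ∑ x : Fin m → Bool, P x * Real.log (P x / Q x)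

open Real Finset

theorem klDiv_add_klDiv_eq_sum_mul {m : ℕ} {P Q g : (Fin m → Bool) → ℝ}
    (hg : ∀ x, log (P x / Q x) = g x) :
    klDiv m P Q + klDiv m Q P = ∑ x, (P x - Q x) * g x := by
  rw [klDiv, klDiv, ← sum_add_distrib]
  refine sum_congr rfl fun x _ => ?_
  rw [← inv_div (P x) (Q x), log_inv, hg]
  ring

theorem pm_pow_of_even (b : Bool) {k : ℕ} (hk : Even k) : pm b ^ k = 1 := by
  cases b <;> simp [pm, hk.neg_one_pow]

theorem pm_mul_self (b : Bool) : pm b * pm b = 1 := by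
  cases b <;> simp [pm]

theorem exp_mul_pm_mul_pm (θ : ℝ) (a b : Bool) :
    exp (θ * (pm a * pm b)) = cosh θ * (1 + tanh θ * (pm a * pm b)) := by
  have hc := (cosh_pos θ).ne'
  have hsinh : cosh θ * tanh θ = sinh θ := by rw [tanh_eq_sinh_div_cosh, mul_div_cancel₀ _ hc]
  rw [mul_add, mul_one, ← mul_assoc (cosh θ), hsinh]
  cases a <;> cases b <;> simp [pm, ← sub_eq_add_neg]

theorem sum_prod_pm_mul_prod_exp {ι : Type*} [Fintype ι] [DecidableEq ι] (θ : ℝ)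
    (S : Finset ι) (y : Bool) :
    ∑ x : ι → Bool, (∏ i ∈ S, pm (x i)) * ∏ i, exp (θ * (pm (x i) * pm y)) =
      (2 * cosh θ) ^ Fintype.card ι * (tanh θ * pm y) ^ S.card := by
  have hcoord : ∀ i, ∑ b : Bool, (if i ∈ S then pm b else 1) * exp (θ * (pm b * pm y)) =
      2 * cosh θ * (if i ∈ S then tanh θ * pm y else 1) := by
    intro i
    simp only [exp_mul_pm_mul_pm, Fintype.sum_bool]
    by_cases hi : i ∈ S <;> cases y <;>
      simp only [hi, pm, if_true, if_false, Bool.false_eq_true] <;> ring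
  calc _ = ∑ x : ι → Bool, ∏ i, (if i ∈ S then pm (x i) else 1) * exp (θ * (pm (x i) * pm y)) := by
          refine sum_congr rfl fun x _ => ?_
          rw [prod_mul_distrib, prod_ite_mem, univ_inter]
    _ = ∏ i, ∑ b : Bool, (if i ∈ S then pm b else 1) * exp (θ * (pm b * pm y)) :=
          (Fintype.prod_sum fun i b => (if i ∈ S then pm b else 1) * exp (θ * (pm b * pm y))).symm
    _ = _ := by
          simp_rw [hcoord]
          rw [prod_mul_distrib, prod_const, card_univ, prod_ite_mem, univ_inter, prod_const]

theorem sum_sumElim_unit {ι β M : Type*} [Fintype ι] [DecidableEq ι] [Fintype β]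
    [AddCommMonoid M] (f : (ι ⊕ Unit → β) → M) :
    ∑ σ, f σ = ∑ x : ι → β, ∑ y : β, f (Sum.elim x fun _ => y) := by
  rw [← Fintype.sum_prod_type']
  refine Fintype.sum_equiv ((Equiv.sumArrowEquivProdArrow ι Unit β).trans
    (Equiv.prodCongrRight fun _ => Equiv.funUnique Unit β)) _ _ fun σ => ?_
  congr 1
  ext (i | u) <;> rfl

theorem exp_energy_sumElim (m : ℕ) (θ : ℝ) (s t : Fin m) (x : Fin m → Bool) (y : Bool) :
    exp (energy m θ s t (Sum.elim x fun _ => y)) =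
      exp (θ * (pm (x s) * pm (x t))) * ∏ i, exp (θ * (pm (x i) * pm y)) := by
  simp only [energy, Sum.elim_inl, Sum.elim_inr, mul_add, exp_add, mul_sum, exp_sum]
  ring

/-- `U` stands for the symmetric difference `T ∆ {s, t}`; summing over `Y` kills odd moments,
whence the parity hypotheses. -/
theorem sum_exp_energy_mul_prod_pm {m : ℕ} (θ : ℝ) (s t : Fin m) (T U : Finset (Fin m))
    (hTU : ∀ x : Fin m → Bool, (∏ i ∈ T, pm (x i)) * (pm (x s) * pm (x t)) = ∏ i ∈ U, pm (x i))
    (hT : Even T.card) (hU : Even U.card) :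
    ∑ σ : Fin m ⊕ Unit → Bool, exp (energy m θ s t σ) * ∏ i ∈ T, pm (σ (Sum.inl i)) =
      2 * (2 * cosh θ) ^ m * cosh θ * (tanh θ ^ T.card + tanh θ ^ (U.card + 1)) := by
  have hsplit : ∀ x y, exp (energy m θ s t (Sum.elim x fun _ => y)) * ∏ i ∈ T, pm (x i) =
      cosh θ * ((∏ i ∈ T, pm (x i)) * ∏ i, exp (θ * (pm (x i) * pm y))) +
        cosh θ * tanh θ * ((∏ i ∈ U, pm (x i)) * ∏ i, exp (θ * (pm (x i) * pm y))) := by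
    intro x y
    rw [exp_energy_sumElim, exp_mul_pm_mul_pm, ← hTU]
    ring
  rw [sum_sumElim_unit, sum_comm]
  simp only [Sum.elim_inl, hsplit, sum_add_distrib, ← mul_sum, sum_prod_pm_mul_prod_exp,
    Fintype.card_fin, mul_pow, pm_pow_of_even _ hT, pm_pow_of_even _ hU, Fintype.sum_bool]
  ring

theorem partition_eq {m : ℕ} (θ : ℝ) {s t : Fin m} (hst : s ≠ t) :
    partition m θ s t = 2 * (2 * cosh θ) ^ m * cosh θ * (1 + tanh θ ^ 3) := by
  have h := sum_exp_energy_mul_prod_pm θ s t ∅ {s, t} (fun x => by simp [prod_pair hst])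
    (by simp) (by simp [card_pair hst])
  simpa [partition, card_pair hst] using h

theorem partition_pos (m : ℕ) (θ : ℝ) (s t : Fin m) : 0 < partition m θ s t :=
  sum_pos (fun _ _ => exp_pos _) univ_nonempty

theorem isingCorr_eq_sum_div {m : ℕ} (θ : ℝ) (s t : Fin m) {a b : Fin m} (hab : a ≠ b) :
    isingCorr m θ s t a b =
      (∑ σ : Fin m ⊕ Unit → Bool, exp (energy m θ s t σ) * ∏ i ∈ {a, b}, pm (σ (Sum.inl i))) /
        partition m θ s t := by
  simp only [isingCorr, isingPMF, prod_pair hab, sum_div, div_mul_eq_mul_div]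

theorem one_add_tanh_pow_three_pos (θ : ℝ) : 0 < 1 + tanh θ ^ 3 := by
  have h := Odd.strictMono_pow (R := ℝ) (by decide : Odd 3) (neg_one_lt_tanh θ)
  norm_num at h
  linarith

theorem tanh_sq_add_tanh_div (θ : ℝ) :
    (tanh θ ^ 2 + tanh θ) / (1 + tanh θ ^ 3) = 1 - 4 * (exp (4 * θ) + 3)⁻¹ := by
  rw [div_eq_iff (one_add_tanh_pow_three_pos θ).ne']
  have hE := exp_pos θ
  have h4 : exp (4 * θ) = exp θ ^ 4 := by rw [← exp_nat_mul]; norm_num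
  rw [tanh_eq, exp_neg, h4]
  field_simp
  ring

theorem isingCorr_self {m : ℕ} (θ : ℝ) {s t : Fin m} (hst : s ≠ t) :
    isingCorr m θ s t s t = 1 - 4 * (exp (4 * θ) + 3)⁻¹ := by
  have hnum := sum_exp_energy_mul_prod_pm θ s t {s, t} ∅
    (fun x => by
      rw [prod_pair hst, prod_empty, mul_mul_mul_comm, pm_mul_self, pm_mul_self, one_mul])
    (by simp [card_pair hst]) (by simp)
  rw [isingCorr_eq_sum_div θ s t hst, hnum, partition_eq θ hst, card_pair hst, card_empty,
    zero_add, pow_one, mul_div_mul_left _ _ (by positivity), tanh_sq_add_tanh_div]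

theorem isingCorr_of_disjoint {m : ℕ} (θ : ℝ) {s t a b : Fin m} (hst : s ≠ t) (hab : a ≠ b)
    (hsa : s ≠ a) (hsb : s ≠ b) (hta : t ≠ a) (htb : t ≠ b) :
    isingCorr m θ s t a b = tanh θ ^ 2 := by
  have hs : s ∉ ({t, a, b} : Finset (Fin m)) := by simp [hst, hsa, hsb]
  have ht : t ∉ ({a, b} : Finset (Fin m)) := by simp [hta, htb]
  have hcard : ({s, t, a, b} : Finset (Fin m)).card = 4 := by
    rw [card_insert_of_notMem hs, card_insert_of_notMem ht, card_pair hab]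
  have hnum := sum_exp_energy_mul_prod_pm θ s t {a, b} {s, t, a, b}
    (fun x => by rw [prod_insert hs, prod_insert ht, prod_pair hab]; ring)
    (by simp [card_pair hab]) (by rw [hcard]; decide)
  rw [isingCorr_eq_sum_div θ s t hab, hnum, partition_eq θ hst, card_pair hab, hcard,
    mul_div_mul_left _ _ (by positivity), div_eq_iff (one_add_tanh_pow_three_pos θ).ne']
  ring

theorem margPMF_eq (m : ℕ) (θ : ℝ) (s t : Fin m) (x : Fin m → Bool) :
    margPMF m θ s t x = exp (θ * (pm (x s) * pm (x t))) *
      ((∑ y : Bool, ∏ i, exp (θ * (pm (x i) * pm y))) / partition m θ s t) := by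
  rw [← mul_div_assoc]
  simp only [margPMF, isingPMF, exp_energy_sumElim, ← sum_div, ← mul_sum]

theorem log_margPMF_div_margPMF {m : ℕ} (θ : ℝ) {s t u v : Fin m} (hst : s ≠ t) (huv : u ≠ v)
    (x : Fin m → Bool) :
    log (margPMF m θ s t x / margPMF m θ u v x) =
      θ * (pm (x s) * pm (x t) - pm (x u) * pm (x v)) := by
  have hW : 0 < ∑ y : Bool, ∏ i, exp (θ * (pm (x i) * pm y)) :=
    sum_pos (fun _ _ => prod_pos fun _ _ => exp_pos _) univ_nonempty
  rw [margPMF_eq, margPMF_eq, partition_eq θ hst, ← partition_eq θ huv,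
    mul_div_mul_right _ _ (div_pos hW (partition_pos m θ u v)).ne', ← exp_sub, log_exp, mul_sub]

theorem sum_margPMF_mul_pm_mul_pm (m : ℕ) (θ : ℝ) (s t a b : Fin m) :
    ∑ x, margPMF m θ s t x * (pm (x a) * pm (x b)) = isingCorr m θ s t a b := by
  rw [isingCorr, sum_sumElim_unit]
  simp only [margPMF, sum_mul, Sum.elim_inl]

theorem klDiv_margPMF_add_klDiv_margPMF {m : ℕ} (θ : ℝ) {s t u v : Fin m} (hst : s ≠ t)
    (huv : u ≠ v) :
    klDiv m (margPMF m θ s t) (margPMF m θ u v) + klDiv m (margPMF m θ u v) (margPMF m θ s t) =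
      θ * (isingCorr m θ s t s t - isingCorr m θ s t u v -
        (isingCorr m θ u v s t - isingCorr m θ u v u v)) := by
  rw [klDiv_add_klDiv_eq_sum_mul (log_margPMF_div_margPMF θ hst huv)]
  simp only [← sum_margPMF_mul_pm_mul_pm, ← sum_sub_distrib, mul_sum]
  exact sum_congr rfl fun x _ => by ring

theorem symmetric_kl_divergence_general (m : ℕ) (θ : ℝ)
    (s t u v : Fin m) (hst : s ≠ t) (huv : u ≠ v)
    (hsu : s ≠ u) (hsv : s ≠ v) (htu : t ≠ u) (htv : t ≠ v) :
    klDiv m (margPMF m θ s t) (margPMF m θ u v) +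
      klDiv m (margPMF m θ u v) (margPMF m θ s t) =
      2 * θ * (isingCorr m θ s t s t - isingCorr m θ u v s t) ∧
    klDiv m (margPMF m θ s t) (margPMF m θ u v) +
      klDiv m (margPMF m θ u v) (margPMF m θ s t) =
      2 * θ * (1 - 4 * (Real.exp (4 * θ) + 3)⁻¹ - Real.tanh θ ^ 2) := by
  rw [klDiv_margPMF_add_klDiv_margPMF θ hst huv, isingCorr_self θ hst, isingCorr_self θ huv,
    isingCorr_of_disjoint θ hst huv hsu hsv htu htv,
    isingCorr_of_disjoint θ huv hst hsu.symm htu.symm hsv.symm htv.symm]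
  constructor <;> ring

/-- For disjoint pairs `{s,t}` and `{u,v}` of distinct indices, the symmetric
KL divergence between the marginal source distributions of `f_{G^{st}}` and `f_{G^{uv}}`
satisfies
`D(P_{G^{st}}‖P_{G^{uv}}) + D(P_{G^{uv}}‖P_{G^{st}}) = 2θ(E_{G^{st}}[λ_sλ_t] − E_{G^{uv}}[λ_sλ_t])
 = 2θ(1 − 4(e^{4θ}+3)^{−1} − tanh²(θ))`. -/
theorem symmetric_kl_divergence (m : ℕ) (θ : ℝ) (hθ : 0 < θ)
    (s t u v : Fin m) (hst : s ≠ t) (huv : u ≠ v)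
    (hsu : s ≠ u) (hsv : s ≠ v) (htu : t ≠ u) (htv : t ≠ v) :
    klDiv m (margPMF m θ s t) (margPMF m θ u v) +
      klDiv m (margPMF m θ u v) (margPMF m θ s t) =
      2 * θ * (isingCorr m θ s t s t - isingCorr m θ u v s t) ∧
    klDiv m (margPMF m θ s t) (margPMF m θ u v) +
      klDiv m (margPMF m θ u v) (margPMF m θ s t) =
      2 * θ * (1 - 4 * (Real.exp (4 * θ) + 3)⁻¹ - Real.tanh θ ^ 2) :=
  symmetric_kl_divergence_general m θ s t u v hst huv hsu hsv htu htv
end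
end
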